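/- For every real τ > 0, the standard expected improvement satisfies (τ⁻² − 3τ⁻⁴)·φ(τ) ≤ ei(τ) ≤ τ⁻²·φ(τ). -/

import Mathlib

/-!
Put `Tₖ(x) = ∫_x^∞ φ(u) u⁻ᵏ du`. Integrating by parts with `φ' = -u φ` gives
`Tₖ(x) + (k + 1) Tₖ₊₂(x) = φ(x) / xᵏ⁺¹` for `x > 0`. The case `k = 0` is `ei(x) = x T₂(x)`,
and the cases `k = 2, 4`, together with `T₄, T₆ ≥ 0`, squeeze
`φ(x)/x³ - 3φ(x)/x⁵ ≤ T₂(x) ≤ φ(x)/x³`.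
-/

open MeasureTheory

/-- The standard normal density `φ(x) = (2π)^{-1/2} exp(-x²/2)`. -/
noncomputable def stdNormalPDF (x : ℝ) : ℝ :=
  (Real.sqrt (2 * Real.pi))⁻¹ * Real.exp (-x ^ 2 / 2)

/-- The standard normal complementary CDF `Φᶜ(x) = ∫_x^∞ φ(u) du`. -/
noncomputable def stdNormalCCDF (x : ℝ) : ℝ :=
  ∫ u in Set.Ioi x, stdNormalPDF u

/-- The standard expected improvement `ei(x) = φ(x) - x·Φᶜ(x)`. -/
noncomputable def stdEI (x : ℝ) : ℝ :=
  stdNormalPDF x - x * stdNormalCCDF x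

open Filter Topology Set

lemma stdNormalPDF_eq_gaussianPDFReal : stdNormalPDF = ProbabilityTheory.gaussianPDFReal 0 1 := by
  ext x
  simp [stdNormalPDF, ProbabilityTheory.gaussianPDFReal]

lemma stdNormalPDF_pos (x : ℝ) : 0 < stdNormalPDF x := by
  unfold stdNormalPDF
  positivity

lemma continuous_stdNormalPDF : Continuous stdNormalPDF := by
  unfold stdNormalPDF
  fun_prop

lemma integrable_stdNormalPDF : Integrable stdNormalPDF := by
  rw [stdNormalPDF_eq_gaussianPDFReal]
  exact ProbabilityTheory.integrable_gaussianPDFReal 0 1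

lemma hasDerivAt_stdNormalPDF (x : ℝ) : HasDerivAt stdNormalPDF (-x * stdNormalPDF x) x := by
  have h : HasDerivAt (fun y : ℝ => -y ^ 2 / 2) (-x) x :=
    ((hasDerivAt_pow 2 x).neg.div_const 2).congr_deriv (by ring)
  exact (h.exp.const_mul _).congr_deriv (by simp only [stdNormalPDF]; ring)

lemma tendsto_stdNormalPDF_atTop : Tendsto stdNormalPDF atTop (𝓝 0) := by
  have h : Tendsto (fun x : ℝ => -x ^ 2 / 2) atTop atBot := by
    simp_rw [neg_div]
    exact tendsto_neg_atTop_atBot.comp ((tendsto_pow_atTop two_ne_zero).atTop_div_const two_pos)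
  have := (Real.tendsto_exp_atBot.comp h).const_mul (Real.sqrt (2 * Real.pi))⁻¹
  rwa [mul_zero] at this

noncomputable def stdNormalTailInvMoment (k : ℕ) (x : ℝ) : ℝ :=
  ∫ u in Ioi x, stdNormalPDF u / u ^ k

lemma stdNormalTailInvMoment_zero (x : ℝ) : stdNormalTailInvMoment 0 x = stdNormalCCDF x := by
  simp [stdNormalTailInvMoment, stdNormalCCDF]

lemma stdNormalTailInvMoment_nonneg (k : ℕ) {x : ℝ} (hx : 0 ≤ x) :
    0 ≤ stdNormalTailInvMoment k x :=
  setIntegral_nonneg measurableSet_Ioi fun u hu =>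
    div_nonneg (stdNormalPDF_pos u).le (pow_nonneg (hx.trans (le_of_lt hu)) k)

lemma integrableOn_stdNormalPDF_div_pow (k : ℕ) {x : ℝ} (hx : 0 < x) :
    IntegrableOn (fun u => stdNormalPDF u / u ^ k) (Ioi x) := by
  refine Integrable.mono' (integrable_stdNormalPDF.integrableOn.div_const (x ^ k)) ?_ ?_
  · exact (continuous_stdNormalPDF.measurable.div (measurable_id.pow_const k)).aestronglyMeasurable
  · filter_upwards [ae_restrict_mem measurableSet_Ioi] with u hu
    have hu0 : 0 < u := hx.trans hu
    rw [Real.norm_of_nonneg (div_nonneg (stdNormalPDF_pos u).le (by positivity))]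
    gcongr
    · exact (stdNormalPDF_pos u).le
    · exact le_of_lt hu

lemma stdNormalTailInvMoment_add (k : ℕ) {x : ℝ} (hx : 0 < x) :
    stdNormalTailInvMoment k x + (k + 1) * stdNormalTailInvMoment (k + 2) x =
      stdNormalPDF x / x ^ (k + 1) := by
  have hderiv : ∀ u ∈ Ici x, HasDerivAt (fun u => -(stdNormalPDF u / u ^ (k + 1)))
      (stdNormalPDF u / u ^ k + (k + 1) * (stdNormalPDF u / u ^ (k + 2))) u := by
    intro u hu
    have hu : u ≠ 0 := (hx.trans_le hu).ne'
    refine ((hasDerivAt_stdNormalPDF u).div (hasDerivAt_pow (k + 1) u)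
      (pow_ne_zero _ hu)).neg.congr_deriv ?_
    field_simp
    push_cast
    ring
  have hint : IntegrableOn
      (fun u => stdNormalPDF u / u ^ k + (k + 1) * (stdNormalPDF u / u ^ (k + 2))) (Ioi x) :=
    (integrableOn_stdNormalPDF_div_pow k hx).add
      ((integrableOn_stdNormalPDF_div_pow (k + 2) hx).const_mul _)
  have hlim : Tendsto (fun u => -(stdNormalPDF u / u ^ (k + 1))) atTop (𝓝 0) := by
    simpa [div_eq_mul_inv] using (tendsto_stdNormalPDF_atTop.mul
      (tendsto_pow_atTop (Nat.succ_ne_zero k)).inv_tendsto_atTop).neg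
  have h := integral_Ioi_of_hasDerivAt_of_tendsto' hderiv hint hlim
  rw [integral_add (integrableOn_stdNormalPDF_div_pow k hx)
    ((integrableOn_stdNormalPDF_div_pow (k + 2) hx).const_mul _), integral_const_mul] at h
  simpa [stdNormalTailInvMoment] using h

lemma stdEI_eq_mul_stdNormalTailInvMoment_two {x : ℝ} (hx : 0 < x) :
    stdEI x = x * stdNormalTailInvMoment 2 x := by
  have h := stdNormalTailInvMoment_add 0 hx
  rw [stdNormalTailInvMoment_zero] at h
  norm_num [eq_div_iff hx.ne'] at h
  rw [stdEI]
  linear_combination -h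

lemma stdNormalTailInvMoment_two_mem_Icc {x : ℝ} (hx : 0 < x) :
    stdNormalTailInvMoment 2 x ∈
      Icc (stdNormalPDF x / x ^ 3 - 3 * (stdNormalPDF x / x ^ 5)) (stdNormalPDF x / x ^ 3) := by
  have h2 := stdNormalTailInvMoment_add 2 hx
  have h4 := stdNormalTailInvMoment_add 4 hx
  have h4_nonneg := stdNormalTailInvMoment_nonneg 4 hx.le
  have h6_nonneg := stdNormalTailInvMoment_nonneg 6 hx.le
  push_cast at h2 h4
  constructor <;> linarith

/-- Bounds on the expected improvement (Lemma `bound_ei`). -/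
theorem stmt4 (τ : ℝ) (hτ : 0 < τ) :
    ((τ ^ 2)⁻¹ - 3 * (τ ^ 4)⁻¹) * stdNormalPDF τ ≤ stdEI τ ∧
      stdEI τ ≤ (τ ^ 2)⁻¹ * stdNormalPDF τ := by
  obtain ⟨hlower, hupper⟩ := stdNormalTailInvMoment_two_mem_Icc hτ
  rw [stdEI_eq_mul_stdNormalTailInvMoment_two hτ]
  constructor
  · calc ((τ ^ 2)⁻¹ - 3 * (τ ^ 4)⁻¹) * stdNormalPDF τ
        = τ * (stdNormalPDF τ / τ ^ 3 - 3 * (stdNormalPDF τ / τ ^ 5)) := by field_simp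
      _ ≤ τ * stdNormalTailInvMoment 2 τ := by gcongr
  · calc τ * stdNormalTailInvMoment 2 τ
        ≤ τ * (stdNormalPDF τ / τ ^ 3) := by gcongr
      _ = (τ ^ 2)⁻¹ * stdNormalPDF τ := by field_simp
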